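/- arXiv:2103.13381 — 3 statements merged into one kernel-verified Lean document; each statement's English description precedes it below -/
import Mathlib

section
/- Let f : ℝ² → ℝ be continuous, continuously differentiable in its first argument when that argument is nonzero, and satisfy f(x,y) = f(x,-y) for all x,y. Fix β > 0 and a closed interval P = [-α_l, -α_s] with 0 < α_s ≤ α_l. Suppose max_{x ∈ -P} ∂f/∂x(x,-β) < -max_{x ∈ P} ∂f/∂x(x,-β). Then there exists no pair (x₁*, x₂*) ∈ ℝ² with x₁* - 0 ∈ P and x₂* - x₁* ∈ P satisfying the stationarity condition ∂f/∂x(x₁*, -β) + ∂f/∂x(x₁* - x₂*, β) = 0. -/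
/-!
At an equilibrium with offsets in `P`, agent 1 sits at `x₁ ∈ P` and `x₁ - x₂ ∈ -P`. By the symmetry
`f(x, y) = f(x, -y)` both terms of the stationarity condition are values of the single function
`g = ∂f/∂x(·, -β)`, which is continuous on the compact intervals `P` and `-P` since they avoid `0`.
Bounding each term by the supremum of `g` over its interval, the hypothesis makes their sum negative.
-/

open Set

theorem continuousOn_deriv_slice {𝕜 E F : Type*} [NontriviallyNormedField 𝕜]
    [NormedAddCommGroup E] [NormedSpace 𝕜 E] [NormedAddCommGroup F] [NormedSpace 𝕜 F]
    {f : 𝕜 → E → F} {s : Set 𝕜} (hs : IsOpen s)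
    (hf : ContDiffOn 𝕜 1 (fun p : 𝕜 × E => f p.1 p.2) (Prod.fst ⁻¹' s)) (c : E) :
    ContinuousOn (deriv (f · c)) s := by
  have hslice : ContDiffOn 𝕜 1 (f · c) s :=
    hf.comp (contDiff_id.prodMk contDiff_const).contDiffOn fun _ ht => ht
  exact hslice.continuousOn_deriv_of_isOpen hs le_rfl

theorem add_lt_zero_of_sSup_image_Icc_lt_neg {g : ℝ → ℝ} {a b c d x y : ℝ}
    (hab : ContinuousOn g (Icc a b)) (hcd : ContinuousOn g (Icc c d))
    (hsup : sSup (g '' Icc c d) < -sSup (g '' Icc a b))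
    (hx : x ∈ Icc a b) (hy : y ∈ Icc c d) : g x + g y < 0 := by
  linarith [hab.le_sSup_image_Icc hx, hcd.le_sSup_image_Icc hy]

theorem Icc_neg_subset_ne_zero {a b : ℝ} (ha : 0 < a) : Icc (-b) (-a) ⊆ {t : ℝ | t ≠ 0} :=
  fun _ ht => (ht.2.trans_lt (neg_neg_of_pos ha)).ne

theorem Icc_subset_ne_zero {a b : ℝ} (ha : 0 < a) : Icc a b ⊆ {t : ℝ | t ≠ 0} :=
  fun _ ht => (ha.trans_le ht.1).ne'

theorem no_NE_three_agents_general
    (f : ℝ → ℝ → ℝ) (β αs αl : ℝ)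
    (hαs : 0 < αs)
    (hC1 : ContDiffOn ℝ 1 (fun p : ℝ × ℝ => f p.1 p.2) {p : ℝ × ℝ | p.1 ≠ 0})
    (hsym : ∀ x y : ℝ, f x y = f x (-y))
    (hcond : sSup ((fun x => deriv (fun t => f t (-β)) x) '' Icc αs αl)
        < - sSup ((fun x => deriv (fun t => f t (-β)) x) '' Icc (-αl) (-αs))) :
    ¬ ∃ x₁ x₂ : ℝ, x₁ - 0 ∈ Icc (-αl) (-αs) ∧ x₂ - x₁ ∈ Icc (-αl) (-αs) ∧
      deriv (fun t => f t (-β)) x₁ + deriv (fun t => f t β) (x₁ - x₂) = 0 := by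
  rintro ⟨x₁, x₂, h₁, h₂, hstat⟩
  have hderiv : deriv (f · β) = deriv (f · (-β)) := congrArg deriv (funext fun t => hsym t β)
  have hg := continuousOn_deriv_slice isOpen_ne hC1 (-β)
  have hx₁ : x₁ ∈ Icc (-αl) (-αs) := by simpa using h₁
  have hx₁₂ : x₁ - x₂ ∈ Icc αs αl := ⟨by linarith [h₂.2], by linarith [h₂.1]⟩
  have hneg := add_lt_zero_of_sSup_image_Icc_lt_neg (hg.mono (Icc_neg_subset_ne_zero hαs))
    (hg.mono (Icc_subset_ne_zero hαs)) hcond hx₁ hx₁₂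
  rw [hderiv] at hstat
  exact hneg.ne hstat

/-- Theorem 1 of the paper: nonexistence of a Nash equilibrium of interest
for three agents (leader 0 and followers 1, 2). -/
theorem no_NE_three_agents
    (f : ℝ → ℝ → ℝ) (β αs αl : ℝ)
    (hβ : 0 < β) (hαs : 0 < αs) (hα : αs ≤ αl)
    (hcont : Continuous (fun p : ℝ × ℝ => f p.1 p.2))
    (hC1 : ContDiffOn ℝ 1 (fun p : ℝ × ℝ => f p.1 p.2) {p : ℝ × ℝ | p.1 ≠ 0})
    (hsym : ∀ x y : ℝ, f x y = f x (-y))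
    (hcond : sSup ((fun x => deriv (fun t => f t (-β)) x) '' Icc αs αl)
        < - sSup ((fun x => deriv (fun t => f t (-β)) x) '' Icc (-αl) (-αs))) :
    ¬ ∃ x₁ x₂ : ℝ, x₁ - 0 ∈ Icc (-αl) (-αs) ∧ x₂ - x₁ ∈ Icc (-αl) (-αs) ∧
      deriv (fun t => f t (-β)) x₁ + deriv (fun t => f t β) (x₁ - x₂) = 0 :=
  no_NE_three_agents_general f β αs αl hαs hC1 hsym hcond
end

section
/- Let f : ℝ² → ℝ be continuous, continuously differentiable in its first argument when nonzero, with f(x,y)=f(x,-y). Fix β > 0, P = [-α_l, -α_s] with 0 < α_s ≤ α_l. Assume x ↦ f(x,-β) has a unique global maximum at x = -α with -α ∈ P, strictly increasing for x < -α and strictly decreasing for x > -α. Define ε = max_{x ∈ 2P} |∂f/∂x(x,-2β)| and Q = {x ∈ P : |∂f/∂x(x,-β)| ≤ ε}. If max_{x ∈ -Q} ∂f/∂x(x,-β) < -max_{x ∈ P} ∂f/∂x(x,-β), then there is no pair (x₁*, x₂*) ∈ ℝ² with x₁* ∈ P and x₂* - x₁* ∈ P satisfying both stationarity equations ∂f/∂x(x₁*,-β)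 + ∂f/∂x(x₁*-x₂*,β) = 0 and ∂f/∂x(x₂*,-2β) + ∂f/∂x(x₂*-x₁*,-β) = 0. -/
open Set

/-- Theorem 2 of the paper: nonexistence of a Nash equilibrium of interest
for three agents, using the narrow set `Q` around the peak `-α`. -/
theorem no_NE_three_agents_narrow
    (f : ℝ → ℝ → ℝ) (β αs αl α ε : ℝ) (Q : Set ℝ)
    (hβ : 0 < β) (hαs : 0 < αs) (hα : αs ≤ αl)
    (hcont : Continuous (fun p : ℝ × ℝ => f p.1 p.2))
    (hC1 : ContDiffOn ℝ 1 (fun p : ℝ × ℝ => f p.1 p.2) {p : ℝ × ℝ | p.1 ≠ 0})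
    (hsym : ∀ x y : ℝ, f x y = f x (-y))
    -- `x ↦ f(x,-β)` has its global maximum at `-α ∈ P`,
    -- strictly increasing before and strictly decreasing after
    (hmem : -α ∈ Icc (-αl) (-αs))
    (hmax : ∀ x : ℝ, f x (-β) ≤ f (-α) (-β))
    (hinc : StrictMonoOn (fun x => f x (-β)) (Iic (-α)))
    (hdec : StrictAntiOn (fun x => f x (-β)) (Ici (-α)))
    -- ε = max_{x ∈ 2P} |∂f/∂x(x,-2β)|
    (hε : ε = sSup ((fun x => |deriv (fun t => f t (-(2*β))) x|) '' Icc (-(2*αl)) (-(2*αs))))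
    -- Q = {x ∈ P : |∂f/∂x(x,-β)| ≤ ε}
    (hQ : Q = {x ∈ Icc (-αl) (-αs) | |deriv (fun t => f t (-β)) x| ≤ ε})
    -- max_{x ∈ -Q} ∂f/∂x(x,-β) < - max_{x ∈ P} ∂f/∂x(x,-β)
    (hcond : sSup ((fun x => deriv (fun t => f t (-β)) x) '' (Neg.neg '' Q))
        < - sSup ((fun x => deriv (fun t => f t (-β)) x) '' Icc (-αl) (-αs))) :
    ¬ ∃ x₁ x₂ : ℝ, x₁ ∈ Icc (-αl) (-αs) ∧ x₂ - x₁ ∈ Icc (-αl) (-αs) ∧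
      deriv (fun t => f t (-β)) x₁ + deriv (fun t => f t β) (x₁ - x₂) = 0 ∧
      deriv (fun t => f t (-(2*β))) x₂ + deriv (fun t => f t (-β)) (x₂ - x₁) = 0 := by
  rintro ⟨x₁, x₂, hx₁, hx₂, heq1, heq2⟩
  have hgh : (fun t => f t β) = (fun t => f t (-β)) := by
    funext t; rw [hsym t β]
  rw [hgh] at heq1
  set g : ℝ → ℝ := deriv (fun t => f t (-β)) with hg
  set k : ℝ → ℝ := deriv (fun t => f t (-(2*β))) with hk
  -- continuity of the partial derivatives away from 0
  have hcderiv : ∀ c : ℝ, ContinuousOn (deriv (fun t => f t c)) {t : ℝ | t ≠ 0} := by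
    intro c
    have h1 : ContDiffOn ℝ 1 (fun t : ℝ => f t c) {t : ℝ | t ≠ 0} := by
      exact hC1.comp ((contDiff_id.prodMk contDiff_const).contDiffOn
        (s := {t : ℝ | t ≠ 0})) (fun t ht => ht)
    exact h1.continuousOn_deriv_of_isOpen isOpen_ne le_rfl
  have hPne : Icc (-αl) (-αs) ⊆ {t : ℝ | t ≠ 0} := fun x hx =>
    ne_of_lt (lt_of_le_of_lt hx.2 (by linarith))
  have h2Pne : Icc (-(2*αl)) (-(2*αs)) ⊆ {t : ℝ | t ≠ 0} := fun x hx =>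
    ne_of_lt (lt_of_le_of_lt hx.2 (by linarith))
  have hnegPne : Icc αs αl ⊆ {t : ℝ | t ≠ 0} := fun x hx =>
    ne_of_gt (lt_of_lt_of_le hαs hx.1)
  have hx₂mem : x₂ ∈ Icc (-(2*αl)) (-(2*αs)) :=
    ⟨by linarith [hx₁.1, hx₂.1], by linarith [hx₁.2, hx₂.2]⟩
  -- |k x₂| ≤ ε
  have hkx₂ : |k x₂| ≤ ε := by
    rw [hε]
    apply le_csSup
    · exact (isCompact_Icc.image_of_continuousOn
        (((hcderiv (-(2*β))).mono h2Pne).abs)).bddAbove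
    · exact ⟨x₂, hx₂mem, rfl⟩
  have hgk : g (x₂ - x₁) = -(k x₂) := by linarith
  have hgabs : |g (x₂ - x₁)| ≤ ε := by rw [hgk, abs_neg]; exact hkx₂
  have hQmem : x₂ - x₁ ∈ Q := by rw [hQ]; exact ⟨hx₂, hgabs⟩
  have hnegQmem : x₁ - x₂ ∈ Neg.neg '' Q := ⟨x₂ - x₁, hQmem, by ring⟩
  -- bound g (x₁ - x₂) by the sup over -Q
  have hsubQ : Neg.neg '' Q ⊆ Icc αs αl := by
    rintro y ⟨q, hq, rfl⟩
    rw [hQ] at hq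
    exact ⟨by linarith [hq.1.2], by linarith [hq.1.1]⟩
  have hbdd1 : BddAbove ((fun x => g x) '' (Neg.neg '' Q)) := by
    refine BddAbove.mono (Set.image_mono hsubQ) ?_
    exact (isCompact_Icc.image_of_continuousOn ((hcderiv (-β)).mono hnegPne)).bddAbove
  have hle1 : g (x₁ - x₂) ≤ sSup ((fun x => g x) '' (Neg.neg '' Q)) :=
    le_csSup hbdd1 ⟨x₁ - x₂, hnegQmem, rfl⟩
  have hle2 : g x₁ ≤ sSup ((fun x => g x) '' Icc (-αl) (-αs)) :=
    le_csSup (isCompact_Icc.image_of_continuousOn ((hcderiv (-β)).mono hPne)).bddAbove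
      ⟨x₁, hx₁, rfl⟩
  linarith
end

section
/- Let f : ℝ² → ℝ be continuous and continuously differentiable in its first argument away from 0. Fix n ≥ 3, β > 0, closed P ⊂ ℝ_{<0} with P = [-α_l,-α_s], and ε = max_{x ∈ 2P} |∂f/∂x(x,-2β)|. If max_{x ∈ -P} ∂f/∂x(x,-β) < -max_{x ∈ P} ∂f/∂x(x,-β) - ε, then there is no X* = (x₁*,…,x_n*) ∈ ℝⁿ with x_i* - x_{i-1}* ∈ P for all i (x₀* = 0) such that for every i, the stationarity condition Σ_{j ∈ N_i} ∂f/∂x(x_i* - x_j*, (j-i)β) = 0 holds, where N_i is the set of indices j ∈ {0,…,n} with 1 ≤ |i-j| ≤ 2. -/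
open Set

lemma slice_deriv_contOn (f : ℝ → ℝ → ℝ)
    (hC1 : ContDiffOn ℝ 1 (fun p : ℝ × ℝ => f p.1 p.2) {p : ℝ × ℝ | p.1 ≠ 0}) (c : ℝ) :
    ContinuousOn (fun x => deriv (fun t => f t c) x) {x : ℝ | x ≠ 0} := by
  set F : ℝ × ℝ → ℝ := fun p => f p.1 p.2 with hF
  have hopen : IsOpen {p : ℝ × ℝ | p.1 ≠ 0} :=
    isOpen_compl_singleton.preimage continuous_fst
  have hderiv : ∀ x : ℝ, x ≠ 0 → HasDerivAt (fun t => f t c)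
      ((fderiv ℝ F (x, c)) ((1 : ℝ), (0 : ℝ))) x := by
    intro x hx
    have hmem : ((x, c) : ℝ × ℝ) ∈ {p : ℝ × ℝ | p.1 ≠ 0} := hx
    have hdF : DifferentiableAt ℝ F (x, c) :=
      (hC1.differentiableOn one_ne_zero).differentiableAt (hopen.mem_nhds hmem)
    have h1 : HasDerivAt (fun t : ℝ => ((t, c) : ℝ × ℝ)) ((1 : ℝ), (0 : ℝ)) x :=
      (hasDerivAt_id x).prodMk (hasDerivAt_const x c)
    exact hdF.hasFDerivAt.comp_hasDerivAt x h1
  have hfc : ContinuousOn (fderiv ℝ F) {p : ℝ × ℝ | p.1 ≠ 0} :=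
    hC1.continuousOn_fderiv_of_isOpen hopen le_rfl
  have hcomp : ContinuousOn (fun x : ℝ => fderiv ℝ F (x, c)) {x : ℝ | x ≠ 0} :=
    hfc.comp ((continuous_id.prodMk continuous_const).continuousOn)
      (fun x hx => hx)
  have : ContinuousOn (fun x : ℝ => (fderiv ℝ F (x, c)) ((1:ℝ),(0:ℝ))) {x : ℝ | x ≠ 0} :=
    hcomp.clm_apply continuousOn_const
  exact this.congr (fun x hx => (hderiv x hx).deriv)

/-- Proposition 1 of the paper: nonexistence of a Nash equilibrium of interest
for `n + 1` agents (`n ≥ 3` followers), where each agent interacts with its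
1- and 2-hop neighbors. -/
theorem no_NE_general
    (f : ℝ → ℝ → ℝ) (n : ℕ) (β αs αl ε : ℝ)
    (hn : 3 ≤ n) (hβ : 0 < β) (hαs : 0 < αs) (hα : αs ≤ αl)
    (hcont : Continuous (fun p : ℝ × ℝ => f p.1 p.2))
    (hC1 : ContDiffOn ℝ 1 (fun p : ℝ × ℝ => f p.1 p.2) {p : ℝ × ℝ | p.1 ≠ 0})
    (hsym : ∀ x y : ℝ, f x y = f x (-y))
    -- ε = max_{x ∈ 2P} |∂f/∂x(x,-2β)|
    (hε : ε = sSup ((fun x => |deriv (fun t => f t (-(2*β))) x|) '' Icc (-(2*αl)) (-(2*αs))))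
    -- max_{x ∈ -P} ∂f/∂x(x,-β) < - max_{x ∈ P} ∂f/∂x(x,-β) - ε
    (hcond : sSup ((fun x => deriv (fun t => f t (-β)) x) '' Icc αs αl)
        < - sSup ((fun x => deriv (fun t => f t (-β)) x) '' Icc (-αl) (-αs)) - ε) :
    ¬ ∃ x : ℕ → ℝ, x 0 = 0 ∧
      (∀ i : ℕ, 1 ≤ i → i ≤ n → x i - x (i - 1) ∈ Icc (-αl) (-αs)) ∧
      (∀ i : ℕ, 1 ≤ i → i ≤ n →
        (∑ j ∈ (Finset.range (n + 1)).filter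
            (fun j => j ≠ i ∧ max i j - min i j ≤ 2),
          deriv (fun t => f t (((j : ℝ) - (i : ℝ)) * β)) (x i - x j)) = 0) := by
  rintro ⟨x, h0, hP, hstat⟩
  set D : ℝ → ℝ := fun y => deriv (fun t => f t (-β)) y with hD
  set H : ℝ → ℝ := fun y => deriv (fun t => f t (-(2*β))) y with hH
  -- stationarity at i = n - 1
  have key := hstat (n - 1) (by omega) (by omega)
  have hset : (Finset.range (n + 1)).filter
      (fun j => j ≠ n - 1 ∧ max (n - 1) j - min (n - 1) j ≤ 2) = {n - 3, n - 2, n} := by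
    ext j
    simp only [Finset.mem_filter, Finset.mem_range, Finset.mem_insert,
      Finset.mem_singleton]
    omega
  rw [hset] at key
  rw [Finset.sum_insert (by simp; omega), Finset.sum_insert (by simp; omega),
    Finset.sum_singleton] at key
  -- cast simplifications
  have c3 : ((n - 3 : ℕ) : ℝ) - ((n - 1 : ℕ) : ℝ) = -2 := by
    rw [Nat.cast_sub (by omega), Nat.cast_sub (by omega)]; ring
  have c2 : ((n - 2 : ℕ) : ℝ) - ((n - 1 : ℕ) : ℝ) = -1 := by
    rw [Nat.cast_sub (by omega), Nat.cast_sub (by omega)]; ring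
  have c1 : ((n : ℕ) : ℝ) - ((n - 1 : ℕ) : ℝ) = 1 := by
    rw [Nat.cast_sub (by omega)]; push_cast; ring
  have e3 : (fun t => f t ((((n - 3 : ℕ) : ℝ) - ((n - 1 : ℕ) : ℝ)) * β))
      = fun t => f t (-(2*β)) := by rw [c3]; funext t; norm_num
  have e2 : (fun t => f t ((((n - 2 : ℕ) : ℝ) - ((n - 1 : ℕ) : ℝ)) * β))
      = fun t => f t (-β) := by rw [c2]; funext t; norm_num
  have e1 : (fun t => f t ((((n : ℕ) : ℝ) - ((n - 1 : ℕ) : ℝ)) * β))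
      = fun t => f t (-β) := by rw [c1]; funext t; rw [one_mul]; exact hsym t β
  rw [e3, e2, e1] at key
  -- key : H (x (n-1) - x (n-3)) + D (x (n-1) - x (n-2)) + D (x (n-1) - x n) = 0
  -- memberships
  have ha : x (n - 1) - x (n - 2) ∈ Icc (-αl) (-αs) := by
    have := hP (n - 1) (by omega) (by omega)
    rwa [show n - 1 - 1 = n - 2 by omega] at this
  have hb' := hP n (by omega) le_rfl
  have hb : x (n - 1) - x n ∈ Icc αs αl := by
    have h1 := hb'.1; have h2 := hb'.2
    exact ⟨by linarith, by linarith⟩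
  have hc2 : x (n - 2) - x (n - 3) ∈ Icc (-αl) (-αs) := by
    have := hP (n - 2) (by omega) (by omega)
    rwa [show n - 2 - 1 = n - 3 by omega] at this
  have hc : x (n - 1) - x (n - 3) ∈ Icc (-(2*αl)) (-(2*αs)) := by
    have h1 := ha.1; have h2 := ha.2; have h3 := hc2.1; have h4 := hc2.2
    exact ⟨by linarith, by linarith⟩
  -- continuity and boundedness
  have hDcont := slice_deriv_contOn f hC1 (-β)
  have hHcont := slice_deriv_contOn f hC1 (-(2*β))
  have hsubN : Icc (-αl) (-αs) ⊆ {y : ℝ | y ≠ 0} := fun y hy =>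
    ne_of_lt (lt_of_le_of_lt hy.2 (by linarith))
  have hsubP : Icc αs αl ⊆ {y : ℝ | y ≠ 0} := fun y hy =>
    ne_of_gt (lt_of_lt_of_le hαs hy.1)
  have hsub2 : Icc (-(2*αl)) (-(2*αs)) ⊆ {y : ℝ | y ≠ 0} := fun y hy =>
    ne_of_lt (lt_of_le_of_lt hy.2 (by linarith))
  have bddN : BddAbove (D '' Icc (-αl) (-αs)) :=
    (isCompact_Icc.image_of_continuousOn (hDcont.mono hsubN)).bddAbove
  have bddP : BddAbove (D '' Icc αs αl) :=
    (isCompact_Icc.image_of_continuousOn (hDcont.mono hsubP)).bddAbove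
  have bdd2 : BddAbove ((fun y => |H y|) '' Icc (-(2*αl)) (-(2*αs))) :=
    (isCompact_Icc.image_of_continuousOn ((hHcont.mono hsub2).abs)).bddAbove
  have hBa : D (x (n - 1) - x (n - 2)) ≤ sSup (D '' Icc (-αl) (-αs)) :=
    le_csSup bddN ⟨_, ha, rfl⟩
  have hAb : D (x (n - 1) - x n) ≤ sSup (D '' Icc αs αl) :=
    le_csSup bddP ⟨_, hb, rfl⟩
  have hεc : |H (x (n - 1) - x (n - 3))| ≤ ε := by
    rw [hε]; exact le_csSup bdd2 ⟨_, hc, rfl⟩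
  have hHle : H (x (n - 1) - x (n - 3)) ≤ ε := (le_abs_self _).trans hεc
  have hHge : -ε ≤ H (x (n - 1) - x (n - 3)) := by
    have := (abs_le.mp hεc).1; linarith
  linarith
end
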